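/- For a three-block decomposition [n] = P \sqcup Q \sqcup J, the iterated unshuffle signs satisfy sgn(\sigma_{P\sqcup Q, J}) \cdot sgn(\sigma_{P,Q}) = sgn(\sigma_{P, Q\sqcup J}) \cdot sgn(\sigma_{Q,J}), where \sigma_{P,Q} is taken inside the ordered set P \sqcup Q and \sigma_{Q,J} inside Q \sqcup J. -/

import Mathlib

/-- The unshuffle permutation `σ_{I,Iᶜ}` of a finite linearly ordered type:
it lists the elements of `I` in increasing order first, followed by the elements of the
complement `Iᶜ` in increasing order. -/
noncomputable def unshuffle {α : Type*} [Fintype α] [LinearOrder α] [DecidableEq α]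
    (I : Finset α) : Equiv.Perm α :=
  (Fintype.orderIsoFinOfCardEq α rfl).toEquiv.symm.trans <|
    (finCongr I.card_add_card_compl.symm).trans <|
      finSumFinEquiv.symm.trans <|
        (Equiv.sumCongr (I.orderIsoOfFin rfl).toEquiv (Iᶜ.orderIsoOfFin rfl).toEquiv).trans <|
          (Equiv.sumCongr (Equiv.refl _)
            (Equiv.subtypeEquivRight (fun x => Finset.mem_compl))).trans <|
            Equiv.sumCompl (· ∈ I)

/-!
A permutation `σ` of a finite linear order is determined by the order `σ⁻¹ x < σ⁻¹ y` that it
pulls back. For `σ_{I,Iᶜ}` this order lists `I` before `Iᶜ`, each increasingly. Pulling back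
through either composite `σ_{P,Q} ∘ σ_{P∪Q,J}` or `σ_{Q,J} ∘ σ_{P,Q∪J}` gives the order listing
`P`, then `Q`, then `J`, so the two composites coincide and the signs agree.
-/

open Equiv.Perm

theorem Equiv.Perm.eq_of_symm_lt_symm_iff {α : Type*} [LinearOrder α] [Finite α]
    {σ τ : Equiv.Perm α} (h : ∀ x y, σ.symm x < σ.symm y ↔ τ.symm x < τ.symm y) : σ = τ := by
  let ρ : α ≃o α :=
    { toEquiv := σ.trans τ.symm
      map_rel_iff' := fun {a b} => by simpa [not_lt] using (h (σ b) (σ a)).not.symm }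
  ext a
  exact τ.symm_apply_eq.mp (DFunLike.congr_fun (Subsingleton.elim ρ (OrderIso.refl α)) a)

/-- The order of `σ_{P,Q,(P ∪ Q)ᶜ}`: first `P`, then `Q`, then the rest, each block increasingly. -/
def BlockLT {α : Type*} [LT α] (P Q : Finset α) (x y : α) : Prop :=
  x ∈ P ∧ y ∉ P ∨ x ∈ Q ∧ y ∉ P ∧ y ∉ Q ∨ (x ∈ P ↔ y ∈ P) ∧ (x ∈ Q ↔ y ∈ Q) ∧ x < y

section Unshuffle

variable {α : Type*} [Fintype α] [LinearOrder α] [DecidableEq α]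

theorem unshuffle_symm_lt_unshuffle_symm_iff (I : Finset α) (x y : α) :
    (unshuffle I).symm x < (unshuffle I).symm y ↔ x ∈ I ∧ y ∉ I ∨ (x ∈ I ↔ y ∈ I) ∧ x < y := by
  by_cases hx : x ∈ I <;> by_cases hy : y ∈ I <;>
    simp [unshuffle, Equiv.sumCompl, hx, hy, Fin.lt_def]
  · exact Nat.lt_add_right _ (Fin.is_lt _)
  · exact (Fin.is_lt _).le.trans (Nat.le_add_right _ _)
  · rfl

theorem ofSubtype_unshuffle_mul_unshuffle_union_symm_lt_iff {P Q : Finset α}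
    (hPQ : Disjoint P Q) (x y : α) :
    (ofSubtype (unshuffle (P.subtype (· ∈ P ∪ Q))) * unshuffle (P ∪ Q)).symm x <
        (ofSubtype (unshuffle (P.subtype (· ∈ P ∪ Q))) * unshuffle (P ∪ Q)).symm y ↔
      BlockLT P Q x y := by
  set π := unshuffle (P.subtype (· ∈ P ∪ Q))
  change (unshuffle (P ∪ Q)).symm (ofSubtype π.symm x) <
    (unshuffle (P ∪ Q)).symm (ofSubtype π.symm y) ↔ _
  have hmem : ∀ z, ofSubtype π.symm z ∈ P ∪ Q ↔ z ∈ P ∪ Q := ofSubtype_apply_mem_iff_mem π.symm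
  rw [unshuffle_symm_lt_unshuffle_symm_iff, hmem, hmem]
  have hdisj : ∀ z ∈ P, z ∉ Q := fun z hz => Finset.disjoint_left.mp hPQ hz
  by_cases hx : x ∈ P ∪ Q <;> by_cases hy : y ∈ P ∪ Q
  · rw [ofSubtype_apply_of_mem _ hx, ofSubtype_apply_of_mem _ hy, Subtype.coe_lt_coe,
      unshuffle_symm_lt_unshuffle_symm_iff]
    simp only [BlockLT, Finset.mem_subtype, Subtype.mk_lt_mk, Finset.mem_union] at hx hy ⊢
    grind
  · simp only [BlockLT, Finset.mem_union] at hx hy ⊢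
    grind
  · simp only [BlockLT, Finset.mem_union] at hx hy ⊢
    grind
  · rw [ofSubtype_apply_of_not_mem _ hx, ofSubtype_apply_of_not_mem _ hy]
    simp only [BlockLT, Finset.mem_union] at hx hy ⊢
    grind

theorem ofSubtype_unshuffle_compl_mul_unshuffle_symm_lt_iff {P Q : Finset α}
    (hPQ : Disjoint P Q) (x y : α) :
    (ofSubtype (unshuffle (Q.subtype (· ∈ Pᶜ))) * unshuffle P).symm x <
        (ofSubtype (unshuffle (Q.subtype (· ∈ Pᶜ))) * unshuffle P).symm y ↔
      BlockLT P Q x y := by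
  set π := unshuffle (Q.subtype (· ∈ Pᶜ))
  change (unshuffle P).symm (ofSubtype π.symm x) < (unshuffle P).symm (ofSubtype π.symm y) ↔ _
  have hmem : ∀ z, ofSubtype π.symm z ∈ Pᶜ ↔ z ∈ Pᶜ := ofSubtype_apply_mem_iff_mem π.symm
  simp only [Finset.mem_compl, not_iff_not] at hmem
  rw [unshuffle_symm_lt_unshuffle_symm_iff, hmem, hmem]
  have hdisj : ∀ z ∈ P, z ∉ Q := fun z hz => Finset.disjoint_left.mp hPQ hz
  by_cases hx : x ∈ P <;> by_cases hy : y ∈ P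
  · rw [ofSubtype_apply_of_not_mem _ (Finset.notMem_compl.mpr hx),
      ofSubtype_apply_of_not_mem _ (Finset.notMem_compl.mpr hy)]
    simp only [BlockLT]
    grind
  · simp only [BlockLT]
    grind
  · simp only [BlockLT]
    grind
  · rw [ofSubtype_apply_of_mem _ (Finset.mem_compl.mpr hx),
      ofSubtype_apply_of_mem _ (Finset.mem_compl.mpr hy), Subtype.coe_lt_coe,
      unshuffle_symm_lt_unshuffle_symm_iff]
    simp only [BlockLT, Finset.mem_subtype, Subtype.mk_lt_mk]
    grind

theorem ofSubtype_unshuffle_mul_unshuffle_union {P Q : Finset α} (hPQ : Disjoint P Q) :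
    ofSubtype (unshuffle (P.subtype (· ∈ P ∪ Q))) * unshuffle (P ∪ Q) =
      ofSubtype (unshuffle (Q.subtype (· ∈ Pᶜ))) * unshuffle P :=
  eq_of_symm_lt_symm_iff fun x y => by
    rw [ofSubtype_unshuffle_mul_unshuffle_union_symm_lt_iff hPQ,
      ofSubtype_unshuffle_compl_mul_unshuffle_symm_lt_iff hPQ]

end Unshuffle

theorem sign_unshuffle_assoc_general {n : ℕ} (P Q J : Finset (Fin n))
    (hPQ : Disjoint P Q) (hPJ : Disjoint P J)
    (hcover : P ∪ Q ∪ J = Finset.univ) :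
    Equiv.Perm.sign (unshuffle (P ∪ Q)) *
        Equiv.Perm.sign (unshuffle (Finset.subtype (· ∈ P ∪ Q) P)) =
      Equiv.Perm.sign (unshuffle P) *
        Equiv.Perm.sign (unshuffle (Finset.subtype (· ∈ Q ∪ J) Q)) := by
  have hcompl : Q ∪ J = Pᶜ := eq_compl_iff_isCompl.mpr
    ⟨Finset.disjoint_union_left.mpr ⟨hPQ.symm, hPJ.symm⟩,
      codisjoint_iff.mpr (by rw [Finset.sup_eq_union, Finset.top_eq_univ, ← hcover]; ac_rfl)⟩
  rw [hcompl]
  have h := congrArg sign (ofSubtype_unshuffle_mul_unshuffle_union hPQ)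
  rw [map_mul, map_mul, sign_ofSubtype, sign_ofSubtype] at h
  rw [mul_comm, h, mul_comm]

/-- Associativity of unshuffle signs for a three-block decomposition `[n] = P ⊔ Q ⊔ J`:
`sgn σ_{P∪Q, J} · sgn σ_{P,Q} = sgn σ_{P, Q∪J} · sgn σ_{Q,J}`, where `σ_{P,Q}` is taken
inside the ordered set `P ∪ Q` and `σ_{Q,J}` inside `Q ∪ J`. -/
theorem sign_unshuffle_assoc {n : ℕ} (P Q J : Finset (Fin n))
    (hPQ : Disjoint P Q) (hPJ : Disjoint P J) (hQJ : Disjoint Q J)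
    (hcover : P ∪ Q ∪ J = Finset.univ) :
    Equiv.Perm.sign (unshuffle (P ∪ Q)) *
        Equiv.Perm.sign (unshuffle (Finset.subtype (· ∈ P ∪ Q) P)) =
      Equiv.Perm.sign (unshuffle P) *
        Equiv.Perm.sign (unshuffle (Finset.subtype (· ∈ Q ∪ J) Q)) :=
  sign_unshuffle_assoc_general P Q J hPQ hPJ hcover
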